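/- If R is a terminating left head variable free ATRS, then dh(→_R, t) ≤ dh(→_{U↓(R)}, t) for every term t over the signature of R, and consequently dc_R(n) ≤ dc_{U↓(R)}(n) for all n; in particular dc_R(n) ∈ O(dc_{U↓(R)}(n)). -/

import Mathlib

/-!
Uncurrying simulates rewriting: if `s →_R t`, then for all arguments `b₁, …, bₖ` the `U`-normal
forms satisfy `(s b₁ ⋯ bₖ)↓ →⁺_{U↓(R)} (t b₁ ⋯ bₖ)↓`. At the root this uses the η-saturated
rule that absorbs as many of the `bᵢ` as the applicative arity of the head symbol of the
left-hand side allows. Since `t →*_U t↓`, every `R`-derivation from `t` yields a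
`U↓(R)`-derivation from `t` that is at least as long.

Derivation heights are suprema in `ℕ`, which are `0` for unbounded sets, so `U↓(R)`-derivations
must also be shown to be bounded, uniformly over terms of bounded size. Currying back maps
`R_η↓`-steps to `R`-steps and `U`-steps to size-decreasing identities, which bounds
`U↓(R)`-derivations from `t` by the `R`-derivations from `curryId t`. These are bounded
uniformly since `R` is finite, hence finitely branching, and terminating, and since collapsing
all variables and the constants not occurring in `R` maps them onto derivations from
finitely many terms.
-/

/-- First-order terms over a signature `F` with arity function `ar` and variables `V`. -/
inductive Term (F : Type) (ar : F → ℕ) (V : Type) : Type where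
  | var : V → Term F ar V
  | app : (f : F) → (Fin (ar f) → Term F ar V) → Term F ar V

namespace Term

variable {F V : Type} {ar : F → ℕ}

/-- Application of a substitution. -/
def subst (σ : V → Term F ar V) : Term F ar V → Term F ar V
  | .var x => σ x
  | .app f ts => .app f (fun i => (ts i).subst σ)

/-- Size of a term. -/
def size : Term F ar V → ℕ
  | .var _ => 1
  | .app _ ts => 1 + ∑ i, (ts i).size

end Term

section Rewriting

variable {F V : Type} {ar : F → ℕ}

/-- The (reflexive) subterm relation: `Subterm u t` means `u` occurs in `t`. -/
inductive Subterm : Term F ar V → Term F ar V → Prop where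
  | refl (t) : Subterm t t
  | app (f) (ts : Fin (ar f) → Term F ar V) (i) (u) :
      Subterm u (ts i) → Subterm u (.app f ts)

/-- Proper subterm: `PSub u t` means `u` is a proper subterm of `t`. -/
def PSub (u t : Term F ar V) : Prop :=
  ∃ (f : F) (ts : Fin (ar f) → Term F ar V) (i : Fin (ar f)),
    t = Term.app f ts ∧ Subterm u (ts i)

/-- One-step rewrite relation of a TRS `R`: closure of the rules under
contexts and substitutions. -/
inductive Rew (R : Set (Term F ar V × Term F ar V)) : Term F ar V → Term F ar V → Prop where
  | rule (l r : Term F ar V) (σ : V → Term F ar V) :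
      (l, r) ∈ R → Rew R (l.subst σ) (r.subst σ)
  | congr (f : F) (ts : Fin (ar f) → Term F ar V) (i : Fin (ar f)) (u : Term F ar V) :
      Rew R (ts i) u → Rew R (.app f ts) (.app f (Function.update ts i u))

/-- Many-step rewriting. -/
def RStar (R : Set (Term F ar V × Term F ar V)) : Term F ar V → Term F ar V → Prop :=
  Relation.ReflTransGen (Rew R)

/-- Normal forms. -/
def NF (R : Set (Term F ar V × Term F ar V)) (t : Term F ar V) : Prop := ∀ u, ¬ Rew R t u

/-- `t` rewrites to the normal form `u` (w.r.t. `R`). -/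
def NormTo (R : Set (Term F ar V × Term F ar V)) (t u : Term F ar V) : Prop :=
  RStar R t u ∧ NF R u

/-- Termination: the rewrite relation is well-founded. -/
def Terminating (R : Set (Term F ar V × Term F ar V)) : Prop :=
  WellFounded (fun t s => Rew R s t)

/-- Confluence. -/
def Confluent (R : Set (Term F ar V × Term F ar V)) : Prop :=
  ∀ s t u, RStar R s t → RStar R s u → ∃ v, RStar R t v ∧ RStar R u v

/-- Innermost one-step rewriting: the contracted redex has only normal
proper subterms. -/
inductive IRew (R : Set (Term F ar V × Term F ar V)) : Term F ar V → Term F ar V → Prop where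
  | rule (l r : Term F ar V) (σ : V → Term F ar V) :
      (l, r) ∈ R → (∀ u, PSub u (l.subst σ) → NF R u) →
      IRew R (l.subst σ) (r.subst σ)
  | congr (f : F) (ts : Fin (ar f) → Term F ar V) (i : Fin (ar f)) (u : Term F ar V) :
      IRew R (ts i) u → IRew R (.app f ts) (.app f (Function.update ts i u))

/-- Innermost termination. -/
def ITerminating (R : Set (Term F ar V × Term F ar V)) : Prop :=
  WellFounded (fun t s => IRew R s t)

/-- `m`-fold composition of a relation. -/
def RelPow (r : α → α → Prop) : ℕ → α → α → Prop
  | 0 => Eq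
  | n + 1 => fun a c => ∃ b, r a b ∧ RelPow r n b c

/-- Derivation height of `t` w.r.t. a relation. -/
noncomputable def dh (r : α → α → Prop) (t : α) : ℕ :=
  sSup { m | ∃ u, RelPow r m t u }

/-- Derivational complexity w.r.t. a relation, restricted to starting terms
satisfying `P`. -/
noncomputable def dcOn {F V : Type} {ar : F → ℕ}
    (r : Term F ar V → Term F ar V → Prop) (P : Term F ar V → Prop) (n : ℕ) : ℕ :=
  sSup { m | ∃ t, P t ∧ t.size ≤ n ∧ m = dh r t }

/-- `f ∈ O(g)`. -/
def BigO (f g : ℕ → ℕ) : Prop := ∃ M N : ℕ, ∀ n, f n ≤ M * g n + N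

end Rewriting
section ATRS

/-- Signature for (un)curried applicative systems: `none` is the binary
application symbol `∘`, and `some (c, i)` is the symbol `c_i` of arity `i`
(with `c_0 = c` an applicative constant). -/
abbrev USig (C : Type) := Option (C × ℕ)

/-- Arity function for `USig`. -/
def uar {C : Type} : USig C → ℕ
  | none => 2
  | some (_, i) => i

/-- Terms over the signature `USig C` (variables are natural numbers). -/
abbrev ATerm (C : Type) := Term (USig C) uar ℕ

variable {C : Type}

/-- Binary application `s ∘ t`. -/
def appT (s t : ATerm C) : ATerm C :=
  .app none (fun i => if i.1 = 0 then s else t)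

/-- The applicative constant `c` (i.e. `c_0`). -/
def constT (c : C) : ATerm C :=
  .app (some (c, 0)) (fun i => (Nat.not_lt_zero _ i.isLt).elim)

/-- Symbols of a purely applicative term: only `∘` and constants `c_0`. -/
def ApplicativeSym : USig C → Prop
  | none => True
  | some (_, i) => i = 0

/-- A term over the applicative signature (constants plus `∘`). -/
def ApplicativeT (t : ATerm C) : Prop :=
  ∀ (u : ATerm C) (f : USig C) (ts : Fin (uar f) → ATerm C),
    Subterm u t → u = Term.app f ts → ApplicativeSym f

/-- `headCount t = some (c, n)` iff `t = c ∘ t₁ ∘ ⋯ ∘ tₙ` for some terms `tᵢ`. -/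
def headCount : ATerm C → Option (C × ℕ)
  | .var _ => none
  | .app none ts => (headCount (ts ⟨0, by simp [uar]⟩)).map (fun p => (p.1, p.2 + 1))
  | .app (some (_, _ + 1)) _ => none
  | .app (some (c, 0)) _ => some (c, 0)

/-- The spine `c ∘ t₁ ∘ ⋯ ∘ tₙ` occurs as a subterm of a left- or
right-hand side of `R`. -/
def SpineIn (R : Set (ATerm C × ATerm C)) (c : C) (n : ℕ) : Prop :=
  ∃ p ∈ R, ∃ t : ATerm C, (Subterm t p.1 ∨ Subterm t p.2) ∧ headCount t = some (c, n)

/-- `aa` is the applicative-arity function of `R`: `aa c` is the maximal `n`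
such that `c ∘ t₁ ∘ ⋯ ∘ tₙ` occurs in a rule of `R` (and `0` if `c` does not
occur applied). -/
def AASpec (R : Set (ATerm C × ATerm C)) (aa : C → ℕ) : Prop :=
  ∀ c : C, (∀ n, SpineIn R c n → n ≤ aa c) ∧ (aa c = 0 ∨ SpineIn R c (aa c))

/-- A term is head variable free if no subterm is of the form `x ∘ v` with
`x` a variable. -/
def HeadVarFree (t : ATerm C) : Prop :=
  ∀ u : ATerm C, Subterm u t → ∀ (x : ℕ) (v : ATerm C), u ≠ appT (.var x) v

/-- Basic well-formedness of an applicative TRS: left-hand sides are not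
variables, right-hand side variables occur on the left, and both sides are
applicative terms. -/
def IsATRS (R : Set (ATerm C × ATerm C)) : Prop :=
  ∀ p ∈ R, (∀ x : ℕ, p.1 ≠ Term.var x) ∧
    (∀ x : ℕ, Subterm (.var x) p.2 → Subterm (.var x) p.1) ∧
    ApplicativeT p.1 ∧ ApplicativeT p.2

/-- `R` is left head variable free. -/
def LHVF (R : Set (ATerm C × ATerm C)) : Prop := ∀ p ∈ R, HeadVarFree p.1

/-- The variables `x_0, …, x_{i-1}`. -/
def uvars (i : ℕ) : Fin i → ATerm C := fun j => .var j.1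

/-- The term `f_i(x_0,…,x_{i-1})`. -/
def fiT (c : C) (i : ℕ) : ATerm C := .app (some (c, i)) (fun j => .var j.1)

/-- The uncurrying system `U`, with rules
`c_i(x_1,…,x_i) ∘ y → c_{i+1}(x_1,…,x_i,y)` for all `0 ≤ i < aa c`. -/
def USys (aa : C → ℕ) : Set (ATerm C × ATerm C) :=
  { p | ∃ (c : C) (i : ℕ), i < aa c ∧
      p = (appT (fiT c i) (.var i), fiT c (i + 1)) }

/-- The currying system `C(F)` (for a signature with arities `arF`), with
rules `f_{i+1}(x_1,…,x_i,y) → f_i(x_1,…,x_i) ∘ y` for all `0 ≤ i < arF f`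
(where `f_{arF f}` plays the role of `f`). -/
def CurrySys {F : Type} (arF : F → ℕ) : Set (ATerm F × ATerm F) :=
  { p | ∃ (f : F) (i : ℕ), i < arF f ∧
      p = (fiT f (i + 1), appT (fiT f i) (.var i)) }

/-- The η-saturation `R_η` of `R` (w.r.t. applicative arities `aa`). -/
inductive Eta (aa : C → ℕ) (R : Set (ATerm C × ATerm C)) : ATerm C × ATerm C → Prop where
  | base (p) : p ∈ R → Eta aa R p
  | eta (l r : ATerm C) (c : C) (n x : ℕ) :
      Eta aa R (l, r) → headCount l = some (c, n) → n < aa c →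
      ¬ Subterm (.var x) l → ¬ Subterm (.var x) r →
      Eta aa R (appT l (.var x), appT r (.var x))

/-- The uncurried system `R_η↓`: the rules of `R_η` with both sides in
`U`-normal form. -/
def EtaDown (aa : C → ℕ) (R : Set (ATerm C × ATerm C)) : Set (ATerm C × ATerm C) :=
  { p | ∃ l r : ATerm C, Eta aa R (l, r) ∧
      NormTo (USys aa) l p.1 ∧ NormTo (USys aa) r p.2 }

/-- The transformed system `U↓(R) = R_η↓ ∪ U(R)`. -/
def UD (aa : C → ℕ) (R : Set (ATerm C × ATerm C)) : Set (ATerm C × ATerm C) :=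
  EtaDown aa R ∪ USys aa

/-- Symbols of the signature of `U↓(R)`: `∘` and `c_i` with `i ≤ aa c`. -/
def GoodSym (aa : C → ℕ) : USig C → Prop
  | none => True
  | some (c, i) => i ≤ aa c

/-- A term over the signature of `U↓(R)`. -/
def GoodTerm (aa : C → ℕ) (t : ATerm C) : Prop :=
  ∀ (u : ATerm C) (f : USig C) (ts : Fin (uar f) → ATerm C),
    Subterm u t → u = Term.app f ts → GoodSym aa f

/-- `C'`: curry a term over the signature of `U↓(R)` and identify all
symbols `c_i` originating from the same constant `c`. -/
def curryId : ATerm C → ATerm C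
  | .var x => .var x
  | .app none ts => appT (curryId (ts ⟨0, by simp [uar]⟩)) (curryId (ts ⟨1, by simp [uar]⟩))
  | .app (some (c, i)) ts =>
      (List.ofFn (fun j : Fin (uar (some (c, i))) => curryId (ts j))).foldl appT (constT c)

end ATRS


section Terms

variable {F V : Type} {ar : F → ℕ}

theorem Subterm.trans {a b c : Term F ar V} (hab : Subterm a b) (hbc : Subterm b c) :
    Subterm a c := by
  induction hbc with
  | refl => exact hab
  | app f ts i _ _ ih => exact .app f ts i a (ih hab)

theorem Subterm.arg (f : F) (ts : Fin (ar f) → Term F ar V) (i : Fin (ar f)) :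
    Subterm (ts i) (.app f ts) :=
  .app f ts i _ (.refl _)

theorem Subterm.app_inv {u : Term F ar V} {f : F} {ts : Fin (ar f) → Term F ar V}
    (h : Subterm u (.app f ts)) : u = .app f ts ∨ ∃ i, Subterm u (ts i) := by
  cases h with
  | refl => exact .inl rfl
  | app _ _ i _ h => exact .inr ⟨i, h⟩

theorem Subterm.var_inv {u : Term F ar V} {x : V} (h : Subterm u (.var x)) : u = .var x := by
  cases h; rfl

theorem Term.one_le_size (t : Term F ar V) : 1 ≤ t.size := by
  cases t <;> simp [Term.size]

theorem Term.size_arg_le (f : F) (ts : Fin (ar f) → Term F ar V) (i : Fin (ar f)) :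
    (ts i).size ≤ ∑ j, (ts j).size :=
  Finset.single_le_sum (f := fun j => (ts j).size) (fun _ _ => Nat.zero_le _) (Finset.mem_univ i)

theorem Subterm.size_le {u t : Term F ar V} (h : Subterm u t) : u.size ≤ t.size := by
  induction h with
  | refl => rfl
  | app f ts i u _ ih =>
    have := Term.size_arg_le f ts i
    simp only [Term.size]; omega

theorem Term.size_app_update (f : F) (ts : Fin (ar f) → Term F ar V)
    (i : Fin (ar f)) (u : Term F ar V) :
    (Term.app f (Function.update ts i u)).size + (ts i).size = (Term.app f ts).size + u.size := by
  simp only [Term.size, Function.apply_update (fun _ t => Term.size t) ts i u,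
    Finset.sum_update_of_mem (Finset.mem_univ i), Finset.sdiff_singleton_eq_erase]
  have := Finset.add_sum_erase Finset.univ (fun k => (ts k).size) (Finset.mem_univ i)
  omega

theorem Term.subst_congr {t : Term F ar V} {σ τ : V → Term F ar V}
    (h : ∀ x, Subterm (.var x) t → σ x = τ x) : t.subst σ = t.subst τ := by
  induction t with
  | var x => exact h x (.refl _)
  | app f ts ih =>
    simp only [Term.subst]
    exact congrArg _ (funext fun i => ih i fun x hx => h x (.app f ts i _ hx))

theorem Term.eq_of_subst_eq {t : Term F ar V} {σ τ : V → Term F ar V}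
    (h : t.subst σ = t.subst τ) {x : V} (hx : Subterm (.var x) t) : σ x = τ x := by
  induction t with
  | var y => cases hx; exact h
  | app f ts ih =>
    rcases hx.app_inv with h' | ⟨i, hi⟩
    · cases h'
    · simp only [Term.subst, Term.app.injEq, heq_eq_eq, true_and] at h
      exact ih i (congrFun h i) hi

theorem Term.subst_subst (t : Term F ar V) (σ τ : V → Term F ar V) :
    (t.subst σ).subst τ = t.subst (fun x => (σ x).subst τ) := by
  induction t with
  | var x => rfl
  | app f ts ih => simp only [Term.subst, ih]

theorem Subterm.subst_var {t : Term F ar V} {x : V} (σ : V → Term F ar V)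
    (h : Subterm (.var x) t) : Subterm (σ x) (t.subst σ) := by
  induction t with
  | var y => cases h; exact .refl _
  | app f ts ih =>
    rcases h.app_inv with h' | ⟨i, hi⟩
    · cases h'
    · exact .app f (fun j => (ts j).subst σ) i _ (ih i hi)

theorem Subterm.of_subst {u t : Term F ar V} {σ : V → Term F ar V}
    (h : Subterm u (t.subst σ)) :
    (∃ f gs, Subterm (Term.app f gs) t ∧ u = (Term.app f gs).subst σ) ∨
      ∃ x, Subterm (.var x) t ∧ Subterm u (σ x) := by
  induction t with
  | var x => exact .inr ⟨x, .refl _, h⟩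
  | app f ts ih =>
    rcases h.app_inv with h' | ⟨i, hi⟩
    · exact .inl ⟨f, ts, .refl _, h'⟩
    · rcases ih i hi with ⟨g, gs, hsub, he⟩ | ⟨x, hx, hu⟩
      · exact .inl ⟨g, gs, hsub.trans (.arg f ts i), he⟩
      · exact .inr ⟨x, .app f ts i _ hx, hu⟩

theorem Term.size_subst_le {t : Term F ar V} {σ : V → Term F ar V} {K : ℕ} (hK : 1 ≤ K)
    (h : ∀ x, Subterm (.var x) t → (σ x).size ≤ K) : (t.subst σ).size ≤ t.size * K := by
  induction t with
  | var x => simpa [Term.size, Term.subst] using h x (.refl _)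
  | app f ts ih =>
    simp only [Term.subst, Term.size]
    calc 1 + ∑ i, ((ts i).subst σ).size ≤ 1 + ∑ i, (ts i).size * K := by
          gcongr with i; exact ih i fun x hx => h x (.app f ts i _ hx)
      _ ≤ (1 + ∑ i, (ts i).size) * K := by rw [add_mul, Finset.sum_mul]; omega

theorem Term.finite_setOf_subterm (t : Term F ar V) :
    {u | Subterm u t}.Finite := by
  induction t with
  | var x => exact (Set.finite_singleton _).subset fun u hu => hu.var_inv
  | app f ts ih =>
    refine ((Set.finite_singleton (Term.app f ts)).union (Set.finite_iUnion ih)).subset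
      fun u hu => ?_
    rcases Subterm.app_inv hu with rfl | ⟨i, hi⟩
    · exact .inl rfl
    · exact .inr (Set.mem_iUnion.mpr ⟨i, hi⟩)

theorem Term.exists_var_bound (t : Term F ar ℕ) :
    ∃ N, ∀ x, Subterm (.var x) t → x < N := by
  induction t with
  | var y => exact ⟨y + 1, fun x hx => by cases hx; omega⟩
  | app f ts ih =>
    choose N hN using ih
    refine ⟨Finset.univ.sup N, fun x hx => ?_⟩
    rcases hx.app_inv with h | ⟨i, hi⟩
    · cases h
    · exact (hN i x hi).trans_le (Finset.le_sup (Finset.mem_univ i))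

end Terms

section RelPow

variable {α : Type*} {r : α → α → Prop}

theorem RelPow.one {a b : α} (h : r a b) : RelPow r 1 a b := ⟨b, h, rfl⟩

theorem RelPow.add {m n : ℕ} {a b c : α} (hab : RelPow r m a b) (hbc : RelPow r n b c) :
    RelPow r (m + n) a c := by
  induction m generalizing a with
  | zero => cases hab; simpa using hbc
  | succ m ih =>
    obtain ⟨d, had, hdb⟩ := hab
    rw [Nat.succ_add]
    exact ⟨d, had, ih hdb⟩

theorem RelPow.exists_of_le {M : ℕ} {a c : α} (h : RelPow r M a c) {m : ℕ} (hm : m ≤ M) :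
    ∃ b, RelPow r m a b := by
  induction m generalizing M a with
  | zero => exact ⟨a, rfl⟩
  | succ m ih =>
    obtain ⟨M, rfl⟩ : ∃ M', M = M' + 1 := ⟨M - 1, by omega⟩
    obtain ⟨d, had, hdc⟩ := h
    obtain ⟨b, hb⟩ := ih hdc (by omega)
    exact ⟨b, d, had, hb⟩

theorem RelPow.le_mul_pow {μ : α → ℕ} {K : ℕ} (hK : ∀ a b, r a b → μ b ≤ μ a * K) {m : ℕ}
    {a b : α} (h : RelPow r m a b) : μ b ≤ μ a * K ^ m := by
  induction m generalizing a with
  | zero => cases h; simp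
  | succ m ih =>
    obtain ⟨d, had, hdb⟩ := h
    calc μ b ≤ μ d * K ^ m := ih hdb
      _ ≤ μ a * K * K ^ m := Nat.mul_le_mul_right _ (hK a d had)
      _ = μ a * K ^ (m + 1) := by ring

theorem RelPow.map {β : Type*} {s : β → β → Prop} (P : α → Prop) (φ : α → β)
    (hφ : ∀ a b, P a → r a b → P b ∧ s (φ a) (φ b)) {m : ℕ} {a b : α} (ha : P a)
    (h : RelPow r m a b) : RelPow s m (φ a) (φ b) := by
  induction m generalizing a with
  | zero => exact congrArg φ h
  | succ m ih =>
    obtain ⟨d, had, hdb⟩ := h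
    obtain ⟨hd, hs⟩ := hφ a d ha had
    exact ⟨φ d, hs, ih hd hdb⟩

theorem Relation.ReflTransGen.exists_relPow {a b : α} (h : Relation.ReflTransGen r a b) :
    ∃ n, RelPow r n a b := by
  induction h with
  | refl => exact ⟨0, rfl⟩
  | tail _ hbc ih => obtain ⟨n, hn⟩ := ih; exact ⟨n + 1, hn.add (.one hbc)⟩

theorem Relation.TransGen.exists_relPow {a b : α} (h : Relation.TransGen r a b) :
    ∃ n, 1 ≤ n ∧ RelPow r n a b := by
  obtain ⟨c, hac, hcb⟩ := Relation.TransGen.head'_iff.mp h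
  obtain ⟨n, hn⟩ := hcb.exists_relPow
  exact ⟨1 + n, by omega, (RelPow.one hac).add hn⟩

theorem dh_le_of_forall_relPow {a : α} {K : ℕ} (h : ∀ m b, RelPow r m a b → m ≤ K) :
    dh r a ≤ K :=
  csSup_le ⟨0, a, rfl⟩ fun m ⟨b, hb⟩ => h m b hb

theorem dh_le_dh {β : Type*} {s : β → β → Prop} {a : α} {b : β} {K : ℕ}
    (hbound : ∀ m c, RelPow s m b c → m ≤ K)
    (hsim : ∀ m c, RelPow r m a c → ∃ d, RelPow s m b d) : dh r a ≤ dh s b :=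
  dh_le_of_forall_relPow fun m c hc =>
    le_csSup ⟨K, fun _ ⟨d, hd⟩ => hbound _ d hd⟩ (hsim m c hc)

theorem dcOn_le_dcOn {F V : Type} {ar : F → ℕ} {r s : Term F ar V → Term F ar V → Prop}
    {P Q : Term F ar V → Prop} {n K : ℕ} (hPQ : ∀ t, P t → Q t)
    (hdh : ∀ t, P t → dh r t ≤ dh s t) (hbound : ∀ t, Q t → t.size ≤ n → dh s t ≤ K) :
    dcOn r P n ≤ dcOn s Q n := by
  rcases Set.eq_empty_or_nonempty {m | ∃ t, P t ∧ t.size ≤ n ∧ m = dh r t} with hempty | hne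
  · simp only [dcOn, hempty, csSup_empty, bot_eq_zero', zero_le]
  · refine csSup_le hne ?_
    rintro _ ⟨t, hPt, htn, rfl⟩
    exact (hdh t hPt).trans <|
      le_csSup ⟨K, fun _ ⟨u, hQu, hun, hm⟩ => hm ▸ hbound u hQu hun⟩ ⟨t, hPQ t hPt, htn, rfl⟩

end RelPow

section Bounded

variable {α : Type*} {r : α → α → Prop}

theorem exists_relPow_bound (hwf : WellFounded (flip r)) (hfin : ∀ a, {b | r a b}.Finite)
    (a : α) : ∃ L, ∀ m b, RelPow r m a b → m ≤ L := by
  induction a using hwf.induction with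
  | _ a ih =>
    choose L hL using ih
    refine ⟨1 + (hfin a).toFinset.attach.sup fun b => L b.1 ((hfin a).mem_toFinset.mp b.2), ?_⟩
    rintro (_ | m) c hc
    · omega
    · obtain ⟨b, hab, hbc⟩ := hc
      have := Finset.le_sup (f := fun b : (hfin a).toFinset => L b.1 ((hfin a).mem_toFinset.mp b.2))
        (Finset.mem_attach _ ⟨b, (hfin a).mem_toFinset.mpr hab⟩)
      dsimp only at this
      have := hL b hab m c hbc
      omega

theorem Set.Finite.exists_relPow_bound {S : Set α} (hS : S.Finite) (hwf : WellFounded (flip r))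
    (hfin : ∀ a, {b | r a b}.Finite) : ∃ L, ∀ a ∈ S, ∀ m b, RelPow r m a b → m ≤ L := by
  choose L hL using _root_.exists_relPow_bound hwf hfin
  exact ⟨hS.toFinset.sup L, fun a ha m b hab =>
    (hL a m b hab).trans (Finset.le_sup (hS.mem_toFinset.mpr ha))⟩

end Bounded

section Rewriting

variable {F V : Type} {ar : F → ℕ} {ρ ρ' : Set (Term F ar V × Term F ar V)}

theorem Rew.mono (hsub : ρ ⊆ ρ') {a b : Term F ar V} (h : Rew ρ a b) : Rew ρ' a b := by
  induction h with
  | rule l r σ hmem => exact .rule l r σ (hsub hmem)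
  | congr f ts i u _ ih => exact .congr f ts i u ih

theorem Rew.union_cases {a b : Term F ar V} (h : Rew (ρ ∪ ρ') a b) : Rew ρ a b ∨ Rew ρ' a b := by
  induction h with
  | rule l r σ hmem => exact hmem.imp (.rule l r σ) (.rule l r σ)
  | congr f ts i u _ ih => exact ih.imp (.congr f ts i u) (.congr f ts i u)

theorem Rew.subst {a b : Term F ar V} (h : Rew ρ a b) (δ : V → Term F ar V) :
    Rew ρ (a.subst δ) (b.subst δ) := by
  induction h with
  | rule l r σ hmem => rw [Term.subst_subst, Term.subst_subst]; exact .rule l r _ hmem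
  | congr f ts i u _ ih =>
    have he : (Term.app f (Function.update ts i u)).subst δ
        = Term.app f (Function.update (fun j => (ts j).subst δ) i (u.subst δ)) := by
      simp only [Term.subst]
      exact congrArg _ (funext fun j => by by_cases hj : j = i <;> simp_all)
    rw [he]
    exact .congr f _ i _ ih

theorem RStar.subst {a b : Term F ar V} (h : RStar ρ a b) (δ : V → Term F ar V) :
    RStar ρ (a.subst δ) (b.subst δ) :=
  Relation.ReflTransGen.lift (Term.subst δ) (fun _ _ hab => Rew.subst hab δ) _ _ h

theorem RStar.mono (hsub : ρ ⊆ ρ') {a b : Term F ar V} (h : RStar ρ a b) : RStar ρ' a b :=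
  Relation.ReflTransGen.mono (fun _ _ => Rew.mono hsub) _ _ h

theorem RStar.app_update (f : F) (ts : Fin (ar f) → Term F ar V) (i : Fin (ar f))
    {u : Term F ar V} (h : RStar ρ (ts i) u) :
    RStar ρ (.app f ts) (.app f (Function.update ts i u)) := by
  induction h with
  | refl => rw [Function.update_eq_self]; exact .refl
  | tail _ hbc ih =>
    refine ih.tail ?_
    simpa using Rew.congr (R := ρ) f (Function.update ts i _) i _ (by simpa using hbc)

theorem RStar.app (f : F) {ts us : Fin (ar f) → Term F ar V} (h : ∀ i, RStar ρ (ts i) (us i)) :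
    RStar ρ (.app f ts) (.app f us) := by
  suffices H : ∀ S : Finset (Fin (ar f)), RStar ρ (.app f ts)
      (.app f fun i => if i ∈ S then us i else ts i) by
    simpa using H Finset.univ
  intro S
  induction S using Finset.induction_on with
  | empty => simp only [Finset.notMem_empty, if_false]; exact .refl
  | @insert a S ha ih =>
    have hupd : (fun i => if i ∈ insert a S then us i else ts i)
        = Function.update (fun i => if i ∈ S then us i else ts i) a (us a) := by
      funext i; by_cases hia : i = a <;> simp_all
    rw [hupd]
    exact ih.trans (RStar.app_update f _ a (by simpa [ha] using h a))

theorem RStar.subst_of_forall {σ τ : V → Term F ar V} (h : ∀ x, RStar ρ (σ x) (τ x))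
    (t : Term F ar V) : RStar ρ (t.subst σ) (t.subst τ) := by
  induction t with
  | var x => exact h x
  | app f ts ih => exact RStar.app f ih

theorem Rew.size_le_mul {K : ℕ} (hK : 1 ≤ K)
    (hrule : ∀ p ∈ ρ, ∀ σ : V → Term F ar V, (p.2.subst σ).size ≤ (p.1.subst σ).size * K)
    {a b : Term F ar V} (h : Rew ρ a b) : b.size ≤ a.size * K := by
  induction h with
  | rule l r σ hmem => exact hrule _ hmem σ
  | congr f ts i u _ ih =>
    have hupd := Term.size_app_update f ts i u
    have harg := Term.size_arg_le f ts i
    have : (Term.app f ts).size * K = K + (∑ j, (ts j).size) * K := by simp only [Term.size]; ring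
    simp only [Term.size] at hupd ⊢
    nlinarith

variable (hvars : ∀ p ∈ ρ, ∀ x, Subterm (.var x) p.2 → Subterm (.var x) p.1)
include hvars

theorem Rew.exists_size_le_mul (hfin : ρ.Finite) :
    ∃ K, 1 ≤ K ∧ ∀ a b : Term F ar V, Rew ρ a b → b.size ≤ a.size * K := by
  refine ⟨1 + hfin.toFinset.sup (fun p => p.2.size), by omega, fun a b h => h.size_le_mul
    (by omega) fun p hp σ => ?_⟩
  have hp2 : p.2.size ≤ hfin.toFinset.sup (fun p => p.2.size) :=
    Finset.le_sup (f := fun p : Term F ar V × Term F ar V => p.2.size) (hfin.mem_toFinset.mpr hp)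
  calc (p.2.subst σ).size ≤ p.2.size * (p.1.subst σ).size :=
        Term.size_subst_le (Term.one_le_size _)
          fun x hx => (Subterm.subst_var σ (hvars p hp x hx)).size_le
    _ ≤ (p.1.subst σ).size * (1 + hfin.toFinset.sup (fun p => p.2.size)) := by nlinarith

theorem Rew.finite_setOf (hfin : ρ.Finite) (s : Term F ar V) : {u | Rew ρ s u}.Finite := by
  have hroot : ∀ s : Term F ar V,
      (⋃ p ∈ ρ, {u | ∃ σ, p.1.subst σ = s ∧ u = p.2.subst σ}).Finite := fun s =>
    hfin.biUnion fun p hp => Set.Subsingleton.finite <| by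
      rintro _ ⟨σ, hσ, rfl⟩ _ ⟨τ, hτ, rfl⟩
      exact Term.subst_congr fun x hx =>
        Term.eq_of_subst_eq (hσ.trans hτ.symm) (hvars p hp x hx)
  induction s with
  | var x =>
    refine (hroot (.var x)).subset fun u hu => ?_
    generalize hs : Term.var x = s at hu
    cases hu with
    | rule l r σ hmem => exact Set.mem_biUnion hmem ⟨σ, rfl, rfl⟩
    | congr => cases hs
  | app f ts ih =>
    refine ((hroot (.app f ts)).union (Set.finite_iUnion fun i => (ih i).image
      fun u => Term.app f (Function.update ts i u))).subset fun u hu => ?_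
    generalize hs : Term.app f ts = s at hu
    cases hu with
    | rule l r σ hmem => exact .inl (Set.mem_biUnion hmem ⟨σ, rfl, rfl⟩)
    | congr _ _ i u hi =>
      cases hs
      exact .inr (Set.mem_iUnion.mpr ⟨i, u, hi, rfl⟩)

end Rewriting

section ATermBasics

variable {C : Type}

theorem app_none_eq_appT (ts : Fin (uar (none : USig C)) → ATerm C) :
    Term.app none ts = appT (ts ⟨0, by simp [uar]⟩) (ts ⟨1, by simp [uar]⟩) := by
  unfold appT
  congr 1
  funext ⟨i, hi⟩
  obtain rfl | rfl : i = 0 ∨ i = 1 := by simp only [uar] at hi; omega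
  all_goals rfl

theorem app_some_zero_eq_constT (c : C) (ts : Fin (uar (some (c, 0))) → ATerm C) :
    Term.app (some (c, 0)) ts = constT c :=
  congrArg _ (funext fun i => absurd i.2 (by simp [uar]))

theorem appT_inj {a b a' b' : ATerm C} (h : appT a b = appT a' b') : a = a' ∧ b = b' := by
  simp only [appT, Term.app.injEq, heq_eq_eq, true_and] at h
  exact ⟨by simpa using congrFun h ⟨0, by simp [uar]⟩, by simpa using congrFun h ⟨1, by simp [uar]⟩⟩

theorem subst_appT (a b : ATerm C) (σ : ℕ → ATerm C) :
    (appT a b).subst σ = appT (a.subst σ) (b.subst σ) := by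
  simp only [appT, Term.subst]
  congr 1
  funext i
  split_ifs <;> rfl

theorem subst_constT (c : C) (σ : ℕ → ATerm C) : (constT c).subst σ = constT c :=
  app_some_zero_eq_constT c _

theorem subst_fiT (c : C) (i : ℕ) (σ : ℕ → ATerm C) :
    (fiT c i).subst σ = Term.app (some (c, i)) (fun j : Fin i => σ j.1) := rfl

theorem size_appT (a b : ATerm C) : (appT a b).size = 1 + a.size + b.size := by
  simp only [appT, Term.size]
  rw [show uar (none : USig C) = 2 from rfl, Fin.sum_univ_two]
  simp [Nat.add_assoc]

theorem size_constT (c : C) : (constT c).size = 1 := by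
  simp [constT, Term.size, uar]

theorem Subterm.appT_left (a b : ATerm C) : Subterm a (appT a b) := by
  simpa [appT] using
    Subterm.arg (none : USig C) (fun i => if i.1 = 0 then a else b) ⟨0, by simp [uar]⟩

theorem Subterm.appT_right (a b : ATerm C) : Subterm b (appT a b) := by
  simpa [appT] using
    Subterm.arg (none : USig C) (fun i => if i.1 = 0 then a else b) ⟨1, by simp [uar]⟩

theorem Subterm.appT_inv {u a b : ATerm C} (h : Subterm u (appT a b)) :
    u = appT a b ∨ Subterm u a ∨ Subterm u b := by
  rcases Subterm.app_inv h with h | ⟨⟨i, hi⟩, hs⟩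
  · exact .inl h
  · obtain rfl | rfl : i = 0 ∨ i = 1 := by simp only [uar] at hi; omega
    · exact .inr (.inl hs)
    · exact .inr (.inr hs)

@[elab_as_elim]
theorem ATerm.induction {motive : ATerm C → Prop} (var : ∀ x, motive (.var x))
    (appT : ∀ a b, motive a → motive b → motive (appT a b))
    (sym : ∀ p (ts : Fin (uar (some p)) → ATerm C), (∀ j, motive (ts j)) →
      motive (.app (some p) ts))
    (t : ATerm C) : motive t := by
  induction t with
  | var x => exact var x
  | app f ts ih =>
    rcases f with _ | p
    · rw [app_none_eq_appT]; exact appT _ _ (ih _) (ih _)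
    · exact sym p ts ih

theorem app_none_update_zero (ts : Fin (uar (none : USig C)) → ATerm C) (u : ATerm C) :
    Term.app none (Function.update ts ⟨0, by simp [uar]⟩ u) = appT u (ts ⟨1, by simp [uar]⟩) := by
  rw [app_none_eq_appT, Function.update_self, Function.update_of_ne (by simp [Fin.ext_iff])]

theorem app_none_update_one (ts : Fin (uar (none : USig C)) → ATerm C) (u : ATerm C) :
    Term.app none (Function.update ts ⟨1, by simp [uar]⟩ u) = appT (ts ⟨0, by simp [uar]⟩) u := by
  rw [app_none_eq_appT, Function.update_self, Function.update_of_ne (by simp [Fin.ext_iff])]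

variable {ρ : Set (ATerm C × ATerm C)}

theorem Rew.appT_left {a a' : ATerm C} (b : ATerm C) (h : Rew ρ a a') :
    Rew ρ (appT a b) (appT a' b) := by
  have := Rew.congr (R := ρ) none (fun i => if i.1 = 0 then a else b) ⟨0, by simp [uar]⟩ a' h
  rw [app_none_update_zero] at this
  exact this

theorem Rew.appT_right (a : ATerm C) {b b' : ATerm C} (h : Rew ρ b b') :
    Rew ρ (appT a b) (appT a b') := by
  have := Rew.congr (R := ρ) none (fun i => if i.1 = 0 then a else b) ⟨1, by simp [uar]⟩ b' h
  rw [app_none_update_one] at this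
  exact this

theorem Rew.induction_aterm {motive : ∀ s t : ATerm C, Rew ρ s t → Prop}
    (rule : ∀ l r σ (hmem : (l, r) ∈ ρ), motive (l.subst σ) (r.subst σ) (.rule l r σ hmem))
    (left : ∀ a a' b (h : Rew ρ a a'), motive a a' h →
      motive (appT a b) (appT a' b) (h.appT_left b))
    (right : ∀ a b b' (h : Rew ρ b b'), motive b b' h →
      motive (appT a b) (appT a b') (h.appT_right a))
    (sym : ∀ p (ts : Fin (uar (some p)) → ATerm C) j u (h : Rew ρ (ts j) u), motive (ts j) u h →
      motive (.app (some p) ts) (.app (some p) (Function.update ts j u)) (.congr (some p) ts j u h))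
    {s t : ATerm C} (h : Rew ρ s t) : motive s t h := by
  induction h with
  | rule l r σ hmem => exact rule l r σ hmem
  | congr f ts i u hs ih =>
    rcases f with _ | p
    · obtain ⟨i, hi⟩ := i
      generalize Rew.congr none ts ⟨i, hi⟩ u hs = h
      revert h
      obtain rfl | rfl : i = 0 ∨ i = 1 := by simp only [uar] at hi; omega
      · rw [app_none_update_zero, app_none_eq_appT]; exact fun _ => left _ _ _ hs ih
      · rw [app_none_update_one, app_none_eq_appT]; exact fun _ => right _ _ _ hs ih
    · exact sym p ts i u hs ih

theorem rstar_appT {a a' b b' : ATerm C} (ha : RStar ρ a a') (hb : RStar ρ b b') :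
    RStar ρ (appT a b) (appT a' b') :=
  RStar.app none fun i => by by_cases h0 : i.1 = 0 <;> simp [h0, ha, hb]

end ATermBasics

section Uncurry

variable {C : Type} (aa : C → ℕ)

/-- `merge aa x y` is the `U`-normal form of `x ∘ y` when `x` and `y` are `U`-normal. -/
def merge (x y : ATerm C) : ATerm C :=
  match x with
  | .app (some (c, i)) us =>
      if _ : i < aa c then .app (some (c, i + 1)) (Fin.snoc (α := fun _ => ATerm C) us y)
      else appT x y
  | _ => appT x y

/-- The `U`-normal form `t↓`. -/
def down : ATerm C → ATerm C
  | .var x => .var x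
  | .app none ts => merge aa (down (ts ⟨0, by simp [uar]⟩)) (down (ts ⟨1, by simp [uar]⟩))
  | .app (some p) ts => .app (some p) (fun i => down (ts i))

/-- The only case in which `merge aa x y` absorbs `y`. -/
def Unsaturated (x : ATerm C) : Prop :=
  ∃ c i, ∃ us : Fin i → ATerm C, x = .app (some (c, i)) us ∧ i < aa c

theorem merge_of_lt {c : C} {i : ℕ} (h : i < aa c) (us : Fin i → ATerm C)
    (y : ATerm C) :
    merge aa (.app (some (c, i)) us) y =
      .app (some (c, i + 1)) (Fin.snoc (α := fun _ => ATerm C) us y) := by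
  simp [merge, h]

theorem merge_eq_appT {x : ATerm C} (h : ¬ Unsaturated aa x) (y : ATerm C) :
    merge aa x y = appT x y := by
  match x with
  | .var _ => rfl
  | .app none _ => rfl
  | .app (some (c, i)) us =>
    have : ¬ i < aa c := fun hlt => h ⟨c, i, us, rfl, hlt⟩
    simp [merge, this]

theorem not_unsaturated_appT (a b : ATerm C) : ¬ Unsaturated aa (appT a b) :=
  fun ⟨_, _, _, he, _⟩ => by cases he

theorem Unsaturated.of_subst {x : ATerm C} (hx : ∀ v, x ≠ .var v) {σ : ℕ → ATerm C}
    (h : Unsaturated aa (x.subst σ)) : Unsaturated aa x := by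
  obtain ⟨c, i, us, he, hlt⟩ := h
  cases x with
  | var v => exact absurd rfl (hx v)
  | app g gs => cases he; exact ⟨c, i, gs, rfl, hlt⟩

theorem merge_eq_app_update (x : ATerm C) :
    ∃ g base k, ∀ z : ATerm C, merge aa x z = Term.app g (Function.update base k z) := by
  by_cases h : Unsaturated aa x
  · obtain ⟨c, i, us, rfl, hlt⟩ := h
    refine ⟨some (c, i + 1), Fin.snoc (α := fun _ => ATerm C) us (.var 0), Fin.last i, fun z => ?_⟩
    rw [merge_of_lt aa hlt]
    exact congrArg _ (Fin.update_snoc_last _ _ _).symm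
  · refine ⟨none, fun i => if i.1 = 0 then x else x, ⟨1, by simp [uar]⟩, fun z => ?_⟩
    rw [merge_eq_appT aa h, app_none_update_one]
    rfl

theorem down_appT (a b : ATerm C) : down aa (appT a b) = merge aa (down aa a) (down aa b) := by
  simp [appT, down]

theorem down_some (p : C × ℕ) (ts : Fin (uar (some p)) → ATerm C) :
    down aa (.app (some p) ts) = .app (some p) (fun j => down aa (ts j)) :=
  rfl

theorem down_ne_var {t : ATerm C} (h : ∀ x, t ≠ .var x) (x : ℕ) : down aa t ≠ .var x := by
  induction t using ATerm.induction with
  | var y => exact absurd rfl (h y)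
  | appT a b _ _ =>
    rw [down_appT]
    unfold merge
    split <;> [split_ifs <;> simp [appT]; simp [appT]]
  | sym p ts _ => rw [down_some]; intro h; cases h

theorem USys.subst_rule {l r : ATerm C} (h : (l, r) ∈ USys aa) (σ : ℕ → ATerm C) :
    ∃ c i, i < aa c ∧ ∃ (us : Fin i → ATerm C) (y : ATerm C),
      l.subst σ = appT (.app (some (c, i)) us) y ∧
      r.subst σ = .app (some (c, i + 1)) (Fin.snoc (α := fun _ => ATerm C) us y) := by
  obtain ⟨c, i, hlt, hp⟩ := h
  simp only [Prod.mk.injEq] at hp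
  obtain ⟨rfl, rfl⟩ := hp
  refine ⟨c, i, hlt, fun j => σ j.1, σ i, subst_appT _ _ _, congrArg _ (funext fun j => ?_)⟩
  induction j using Fin.lastCases with
  | last => simp [Term.subst]
  | cast k => simp [Term.subst]

theorem Rew.USys_of_lt {c : C} {i : ℕ} (h : i < aa c) (us : Fin i → ATerm C)
    (y : ATerm C) :
    Rew (USys aa) (appT (.app (some (c, i)) us) y)
      (.app (some (c, i + 1)) (Fin.snoc (α := fun _ => ATerm C) us y)) := by
  classical
  let σ : ℕ → ATerm C := fun x => if hx : x < i then us ⟨x, hx⟩ else y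
  have hl : (appT (fiT c i) (.var i)).subst σ = appT (.app (some (c, i)) us) y := by
    simp [subst_appT, subst_fiT, σ, Term.subst]
  have hr : (fiT c (i + 1)).subst σ =
      .app (some (c, i + 1)) (Fin.snoc (α := fun _ => ATerm C) us y) := by
    refine congrArg _ (funext fun j => ?_)
    induction j using Fin.lastCases with
    | last => simp [σ, Term.subst]
    | cast k => simp [σ, Term.subst]
  simpa only [hl, hr] using Rew.rule (R := USys aa) _ _ σ ⟨c, i, h, rfl⟩

theorem rstar_appT_merge (x y : ATerm C) : RStar (USys aa) (appT x y) (merge aa x y) := by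
  by_cases h : Unsaturated aa x
  · obtain ⟨c, i, us, rfl, hlt⟩ := h
    rw [merge_of_lt aa hlt]
    exact .single (Rew.USys_of_lt aa hlt us y)
  · rw [merge_eq_appT aa h]
    exact .refl

theorem rstar_down (t : ATerm C) : RStar (USys aa) t (down aa t) := by
  induction t using ATerm.induction with
  | var x => exact .refl
  | appT a b iha ihb => rw [down_appT]; exact (rstar_appT iha ihb).trans (rstar_appT_merge aa _ _)
  | sym p ts ih => rw [down_some]; exact RStar.app _ ih

theorem size_eq_of_rew_USys {a b : ATerm C} (h : Rew (USys aa) a b) : a.size = b.size + 1 := by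
  induction h with
  | rule l r σ hmem =>
    obtain ⟨c, i, -, us, y, hl, hr⟩ := USys.subst_rule aa hmem σ
    rw [hl, hr, size_appT]
    change 1 + (1 + ∑ j : Fin i, (us j).size) + y.size
      = (1 + ∑ j : Fin (i + 1), (Fin.snoc (α := fun _ => ATerm C) us y j).size) + 1
    simp only [Fin.sum_univ_castSucc, Fin.snoc_castSucc, Fin.snoc_last]
    omega
  | congr f ts i u _ ih =>
    have := Term.size_app_update f ts i u
    omega

theorem size_le_of_rstar_USys {a b : ATerm C} (h : RStar (USys aa) a b) : b.size ≤ a.size := by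
  induction h with
  | refl => rfl
  | tail _ hbc ih => have := size_eq_of_rew_USys aa hbc; omega

theorem down_eq_of_rew_USys {a b : ATerm C} (h : Rew (USys aa) a b) :
    down aa a = down aa b := by
  induction h using Rew.induction_aterm with
  | rule l r σ hmem =>
    obtain ⟨c, i, hlt, us, y, hl, hr⟩ := USys.subst_rule aa hmem σ
    rw [hl, hr, down_appT]
    exact (merge_of_lt aa hlt (fun k => down aa (us k)) _).trans
      (congrArg _ (Fin.comp_snoc (down aa) us y).symm)
  | left a a' b _ ih => rw [down_appT, down_appT, ih]
  | right a b b' _ ih => rw [down_appT, down_appT, ih]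
  | sym p ts j u _ ih =>
    have : down aa ∘ ts = down aa ∘ Function.update ts j u := by
      rw [Function.comp_update, ← ih]
      exact (Function.update_eq_self j _).symm
    exact congrArg (Term.app (some p)) this

theorem down_eq_of_rstar_USys {a b : ATerm C} (h : RStar (USys aa) a b) :
    down aa a = down aa b := by
  induction h with
  | refl => rfl
  | tail _ hbc ih => exact ih.trans (down_eq_of_rew_USys aa hbc)

theorem down_down (t : ATerm C) : down aa (down aa t) = down aa t :=
  (down_eq_of_rstar_USys aa (rstar_down aa t)).symm

theorem nf_down (t : ATerm C) : NF (USys aa) (down aa t) := by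
  intro u hu
  have hsize := size_eq_of_rew_USys aa hu
  have hdown : down aa u = down aa t := by rw [← down_eq_of_rew_USys aa hu, down_down]
  have hle := size_le_of_rstar_USys aa (rstar_down aa u)
  rw [hdown] at hle
  omega

variable {C : Type} (aa : C → ℕ)

theorem down_foldl (a : ATerm C) (bs : List (ATerm C)) :
    down aa (bs.foldl appT a) = (bs.map (down aa)).foldl (merge aa) (down aa a) := by
  induction bs generalizing a with
  | nil => rfl
  | cons b bs ih => simp only [List.foldl_cons, List.map_cons, ih, down_appT]

theorem foldl_merge_of_not_lt {c : C} {i : ℕ} (hi : ¬ i < aa c) (us : Fin i → ATerm C)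
    (bs : List (ATerm C)) :
    bs.foldl (merge aa) (.app (some (c, i)) us) = bs.foldl appT (.app (some (c, i)) us) := by
  suffices h : ∀ x : ATerm C, ¬ Unsaturated aa x → bs.foldl (merge aa) x = bs.foldl appT x from
    h _ fun ⟨_, _, _, he, hlt⟩ => by cases he; exact hi hlt
  induction bs with
  | nil => exact fun _ _ => rfl
  | cons b bs ih =>
    intro x hx
    rw [List.foldl_cons, List.foldl_cons, merge_eq_appT aa hx]
    exact ih _ (not_unsaturated_appT aa _ _)

theorem headCount_appT (a b : ATerm C) :
    headCount (appT a b) = (headCount a).map (fun p => (p.1, p.2 + 1)) := by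
  simp [appT, headCount]

theorem down_of_headCount_eq_some {t : ATerm C} {c : C} {m : ℕ}
    (ht : headCount t = some (c, m)) (hm : m ≤ aa c) :
    ∃ us : Fin m → ATerm C, down aa t = .app (some (c, m)) us := by
  induction t using ATerm.induction generalizing m with
  | var x => simp [headCount] at ht
  | appT a b iha _ =>
    rw [headCount_appT, Option.map_eq_some_iff] at ht
    obtain ⟨⟨c', m'⟩, ha, he⟩ := ht
    simp only [Prod.mk.injEq] at he
    obtain ⟨rfl, rfl⟩ := he
    obtain ⟨us, hus⟩ := iha ha (by omega)
    rw [down_appT, hus, merge_of_lt aa (by omega)]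
    exact ⟨_, rfl⟩
  | sym p ts _ =>
    obtain ⟨c', _ | i⟩ := p <;> simp only [headCount, Option.some.injEq, Prod.mk.injEq,
      reduceCtorEq] at ht
    obtain ⟨rfl, rfl⟩ := ht
    exact ⟨fun k => down aa (ts k), rfl⟩

theorem merge_subst {x : ATerm C} (hx : ∀ v, x ≠ .var v) (y : ATerm C) (σ : ℕ → ATerm C) :
    (merge aa x y).subst σ = merge aa (x.subst σ) (y.subst σ) := by
  by_cases h : Unsaturated aa x
  · obtain ⟨c, i, us, rfl, hlt⟩ := h
    rw [merge_of_lt aa hlt]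
    refine ((merge_of_lt aa hlt (fun j : Fin i => (us j).subst σ) _).trans ?_).symm
    exact congrArg (Term.app (some (c, i + 1))) (Fin.comp_snoc (Term.subst σ) us y).symm
  · rw [merge_eq_appT aa h, subst_appT, merge_eq_appT aa fun h' => h (h'.of_subst aa hx)]

theorem HeadVarFree.subterm {t u : ATerm C} (h : HeadVarFree t) (hu : Subterm u t) :
    HeadVarFree u :=
  fun v hv => h v (hv.trans hu)

theorem HeadVarFree.appT_left {a b : ATerm C} (h : HeadVarFree (appT a b)) : HeadVarFree a :=
  h.subterm (.appT_left a b)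

theorem HeadVarFree.appT_right {a b : ATerm C} (h : HeadVarFree (appT a b)) : HeadVarFree b :=
  h.subterm (.appT_right a b)

theorem HeadVarFree.appT_left_ne_var {a b : ATerm C} (h : HeadVarFree (appT a b)) (x : ℕ) :
    a ≠ .var x := by
  rintro rfl
  exact h _ (.refl _) x b rfl

theorem down_subst {t : ATerm C} (ht : HeadVarFree t) (σ : ℕ → ATerm C) :
    down aa (t.subst σ) = (down aa t).subst (fun x => down aa (σ x)) := by
  induction t using ATerm.induction with
  | var x => rfl
  | appT a b iha ihb =>
    rw [subst_appT, down_appT, down_appT, iha ht.appT_left, ihb ht.appT_right,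
      merge_subst aa (down_ne_var aa ht.appT_left_ne_var)]
  | sym p ts ih =>
    exact congrArg (Term.app (some p)) (funext fun j => ih j (ht.subterm (.arg _ ts j)))

end Uncurry

section BelowRoot

variable {C : Type} (aa : C → ℕ) {ρ : Set (ATerm C × ATerm C)}

def BelowRootStep (ρ : Set (ATerm C × ATerm C)) (p q : ATerm C) : Prop :=
  ∃ f ts i u, p = Term.app f ts ∧ q = Term.app f (Function.update ts i u) ∧ Rew ρ (ts i) u

theorem BelowRootStep.rew {p q : ATerm C} (h : BelowRootStep ρ p q) : Rew ρ p q := by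
  obtain ⟨f, ts, i, u, rfl, rfl, hs⟩ := h
  exact .congr f ts i u hs

theorem BelowRootStep.merge_left {p q : ATerm C} (h : BelowRootStep ρ p q) (z : ATerm C) :
    BelowRootStep ρ (merge aa p z) (merge aa q z) := by
  by_cases hp : Unsaturated aa p
  · obtain ⟨c, i, us, rfl, hlt⟩ := hp
    obtain ⟨f, ts, k, u, he, rfl, hs⟩ := h
    cases he
    refine ⟨some (c, i + 1), Fin.snoc (α := fun _ => ATerm C) us z, Fin.castSucc k, u,
      merge_of_lt aa hlt us z,
      (merge_of_lt aa hlt _ z).trans (congrArg _ (Fin.snoc_update _ _ _ _)), ?_⟩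
    exact (Fin.snoc_castSucc (α := fun _ => ATerm C) z us k).symm ▸ hs
  · have hq : ¬ Unsaturated aa q := by
      obtain ⟨f, ts, k, u, rfl, rfl, -⟩ := h
      rintro ⟨c, i, us, he, hlt⟩
      cases he
      exact hp ⟨c, i, ts, rfl, hlt⟩
    rw [merge_eq_appT aa hp, merge_eq_appT aa hq]
    refine ⟨none, fun j => if j.1 = 0 then p else z, ⟨0, by simp [uar]⟩, q, rfl, ?_, h.rew⟩
    rw [app_none_update_zero]
    rfl

theorem BelowRootStep.foldl_merge {p q : ATerm C} (h : BelowRootStep ρ p q) (bs : List (ATerm C)) :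
    Rew ρ (bs.foldl (merge aa) p) (bs.foldl (merge aa) q) := by
  induction bs generalizing p q with
  | nil => exact h.rew
  | cons b bs ih => exact ih (h.merge_left aa b)

theorem TransGen.foldl_merge_app_update {x y : ATerm C} (h : Relation.TransGen (Rew ρ) x y)
    (f : USig C) (ts : Fin (uar f) → ATerm C) (i : Fin (uar f)) (bs : List (ATerm C)) :
    Relation.TransGen (Rew ρ) (bs.foldl (merge aa) (.app f (Function.update ts i x)))
      (bs.foldl (merge aa) (.app f (Function.update ts i y))) := by
  have step : ∀ {x y : ATerm C}, Rew ρ x y → BelowRootStep ρ (.app f (Function.update ts i x))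
      (.app f (Function.update ts i y)) := fun {x y} hxy =>
    ⟨f, Function.update ts i x, i, y, rfl, by rw [Function.update_idem], by simpa using hxy⟩
  induction h with
  | single hs => exact .single (BelowRootStep.foldl_merge aa (step hs) bs)
  | tail _ hs ih => exact ih.tail (BelowRootStep.foldl_merge aa (step hs) bs)

end BelowRoot

section Applicative

variable {C : Type}

theorem ApplicativeT.subterm {t u : ATerm C} (h : ApplicativeT t) (hu : Subterm u t) :
    ApplicativeT u :=
  fun v f ts hv => h v f ts (hv.trans hu)

theorem ApplicativeT.arity_eq_zero {c : C} {i : ℕ} {ts : Fin (uar (some (c, i))) → ATerm C}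
    (h : ApplicativeT (.app (some (c, i)) ts)) : i = 0 :=
  h _ (some (c, i)) ts (.refl _) rfl

theorem applicativeT_var (x : ℕ) : ApplicativeT (.var x : ATerm C) := by
  intro u f ts hsub he
  cases hsub
  cases he

theorem ApplicativeT.appT {a b : ATerm C} (ha : ApplicativeT a) (hb : ApplicativeT b) :
    ApplicativeT (appT a b) := by
  intro u f ts hsub he
  rcases hsub.appT_inv with rfl | hsub | hsub
  · cases he; trivial
  · exact ha u f ts hsub he
  · exact hb u f ts hsub he

theorem applicativeT_constT (c : C) : ApplicativeT (constT c) := by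
  intro u f ts hsub he
  rcases hsub.app_inv with rfl | ⟨i, _⟩
  · cases he; rfl
  · exact absurd i.2 (by simp [uar])

theorem ApplicativeT.goodTerm (aa : C → ℕ) {t : ATerm C} (h : ApplicativeT t) : GoodTerm aa t := by
  intro u f ts hsub he
  have := h u f ts hsub he
  rcases f with _ | ⟨c, i⟩
  · trivial
  · exact (show i = 0 from this) ▸ Nat.zero_le _

theorem HeadVarFree.appT_var {a : ATerm C} (ha : HeadVarFree a) (hnv : ∀ x, a ≠ .var x) (y : ℕ) :
    HeadVarFree (appT a (.var y)) := by
  intro u hsub x v hne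
  rcases hsub.appT_inv with rfl | hsub | hsub
  · exact hnv x (appT_inj hne).1
  · exact ha u hsub x v hne
  · cases hsub.var_inv; cases hne

theorem exists_headCount_eq_some {l : ATerm C} (hA : ApplicativeT l) (hH : HeadVarFree l)
    (hnv : ∀ x, l ≠ .var x) : ∃ c n, headCount l = some (c, n) := by
  induction l using ATerm.induction with
  | var x => exact absurd rfl (hnv x)
  | appT a b iha _ =>
    obtain ⟨c, n, hcn⟩ := iha (hA.subterm (.appT_left a b)) hH.appT_left hH.appT_left_ne_var
    exact ⟨c, n + 1, by rw [headCount_appT, hcn]; rfl⟩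
  | sym p ts _ =>
    obtain ⟨c, i⟩ := p
    obtain rfl := hA.arity_eq_zero
    exact ⟨c, 0, rfl⟩

end Applicative

section EtaExpansion

variable {C : Type}

/-- `appVars t N m = t ∘ x_N ∘ ⋯ ∘ x_{N+m-1}`. -/
def appVars (t : ATerm C) (N : ℕ) : ℕ → ATerm C
  | 0 => t
  | m + 1 => appT (appVars t N m) (.var (N + m))

theorem headCount_appVars {t : ATerm C} {c : C} {n : ℕ} (ht : headCount t = some (c, n))
    (N m : ℕ) : headCount (appVars t N m) = some (c, n + m) := by
  induction m with
  | zero => exact ht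
  | succ m ih => rw [appVars, headCount_appT, ih]; rfl

theorem var_lt_of_subterm_appVars {t : ATerm C} {N : ℕ} (ht : ∀ x, Subterm (.var x) t → x < N)
    {m x : ℕ} (h : Subterm (.var x) (appVars t N m)) : x < N + m := by
  induction m with
  | zero => exact ht x h
  | succ m ih =>
    rcases h.appT_inv with h | h | h
    · cases h
    · have := ih h; omega
    · cases h.var_inv; omega

theorem HeadVarFree.appVars {t : ATerm C} (ht : HeadVarFree t) (hnv : ∀ x, t ≠ .var x)
    (N m : ℕ) : HeadVarFree (appVars t N m) := by
  induction m with
  | zero => exact ht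
  | succ m ih =>
    refine ih.appT_var ?_ _
    cases m <;> simp [_root_.appVars, appT, hnv]

theorem Eta.appVars {aa : C → ℕ} {R : Set (ATerm C × ATerm C)} {l r : ATerm C}
    (h : Eta aa R (l, r)) {c : C} {n : ℕ} (hl : headCount l = some (c, n)) {N : ℕ}
    (hlN : ∀ x, Subterm (.var x) l → x < N) (hrN : ∀ x, Subterm (.var x) r → x < N) :
    ∀ m, n + m ≤ aa c → Eta aa R (appVars l N m, appVars r N m)
  | 0, _ => h
  | m + 1, hm =>
    .eta _ _ c (n + m) (N + m) (Eta.appVars h hl hlN hrN m (by omega)) (headCount_appVars hl N m)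
      (by omega) (fun hx => by have := var_lt_of_subterm_appVars hlN hx; omega)
      (fun hx => by have := var_lt_of_subterm_appVars hrN hx; omega)

theorem appVars_subst {t : ATerm C} {N : ℕ} (ht : ∀ x, Subterm (.var x) t → x < N)
    (σ : ℕ → ATerm C) {bs : List (ATerm C)} {m : ℕ} (hm : m ≤ bs.length) :
    (appVars t N m).subst (fun x => if x < N then σ x else bs.getD (x - N) (.var 0)) =
      (bs.take m).foldl appT (t.subst σ) := by
  induction m with
  | zero => exact Term.subst_congr fun x hx => if_pos (ht x hx)
  | succ m ih =>
    rw [appVars, subst_appT, ih (by omega), List.take_add_one, List.getElem?_eq_getElem (by omega),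
      Option.toList_some, List.foldl_append]
    simp [Term.subst, List.getElem?_eq_getElem (show m < bs.length by omega)]

end EtaExpansion

section Simulation

variable {C : Type} {aa : C → ℕ} {ρ : Set (ATerm C × ATerm C)}

theorem Rew.foldl_appT {a a' : ATerm C} (bs : List (ATerm C)) (h : Rew ρ a a') :
    Rew ρ (bs.foldl appT a) (bs.foldl appT a') := by
  induction bs generalizing a a' with
  | nil => exact h
  | cons b bs ih => exact ih (h.appT_left b)

theorem rstar_foldl_appT {a a' : ATerm C} {g : ATerm C → ATerm C} (ha : RStar ρ a a')
    (bs : List (ATerm C)) (hbs : ∀ b ∈ bs, RStar ρ b (g b)) :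
    RStar ρ (bs.foldl appT a) ((bs.map g).foldl appT a') := by
  induction bs generalizing a a' with
  | nil => exact ha
  | cons b bs ih =>
    exact ih (rstar_appT ha (hbs b (by simp))) fun b' hb' => hbs b' (by simp [hb'])

variable {R : Set (ATerm C × ATerm C)}

theorem rstar_UD_down_of_rstar_USys {a b : ATerm C} (h : RStar (USys aa) a b) :
    RStar (UD aa R) b (down aa a) := by
  rw [down_eq_of_rstar_USys aa h]
  exact (rstar_down aa b).mono Set.subset_union_right

theorem transGen_down_foldl_of_mem (hR : IsATRS R) (hl : LHVF R) (haa : AASpec R aa)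
    {l r : ATerm C} (hmem : (l, r) ∈ R) (σ : ℕ → ATerm C) (bs : List (ATerm C)) :
    Relation.TransGen (Rew (UD aa R)) (down aa (bs.foldl appT (l.subst σ)))
      (down aa (bs.foldl appT (r.subst σ))) := by
  obtain ⟨hnv, -, hAl, -⟩ := hR _ hmem
  obtain ⟨c, n, hc⟩ := exists_headCount_eq_some hAl (hl _ hmem) hnv
  have hn : n ≤ aa c := (haa c).1 n ⟨_, hmem, l, .inl (.refl l), hc⟩
  obtain ⟨N, hN⟩ := Term.exists_var_bound (appT l r)
  have hlN : ∀ x, Subterm (.var x) l → x < N := fun x hx => hN x (hx.trans (.appT_left l r))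
  have hrN : ∀ x, Subterm (.var x) r → x < N := fun x hx => hN x (hx.trans (.appT_right l r))
  -- the η-expanded rule consumes `j` of the arguments `bs`
  obtain ⟨j, hj, hjlen, hjsat⟩ :
      ∃ j, n + j ≤ aa c ∧ j ≤ bs.length ∧ (j < bs.length → n + j = aa c) :=
    ⟨min (aa c - n) bs.length, by omega, min_le_right _ _, by omega⟩
  let σ' : ℕ → ATerm C := fun x => if x < N then σ x else bs.getD (x - N) (.var 0)
  have hsplit : ∀ t : ATerm C, (∀ x, Subterm (.var x) t → x < N) →
      bs.foldl appT (t.subst σ) = (bs.drop j).foldl appT ((appVars t N j).subst σ') := by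
    intro t ht
    rw [appVars_subst ht σ hjlen, ← List.foldl_append, List.take_append_drop]
  have hrule : (down aa (appVars l N j), down aa (appVars r N j)) ∈ UD aa R :=
    .inl ⟨_, _, Eta.appVars (.base _ hmem) hc hlN hrN j hj,
      ⟨rstar_down aa _, nf_down aa _⟩, ⟨rstar_down aa _, nf_down aa _⟩⟩
  have hlhs : down aa (bs.foldl appT (l.subst σ)) = ((bs.drop j).map (down aa)).foldl appT
      ((down aa (appVars l N j)).subst fun x => down aa (σ' x)) := by
    obtain ⟨us, hus⟩ := down_of_headCount_eq_some aa (headCount_appVars hc N j) hj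
    rw [hsplit l hlN, down_foldl, down_subst aa ((hl _ hmem).appVars hnv N j), hus]
    rcases Nat.lt_or_ge j bs.length with hlt | hge
    · exact foldl_merge_of_not_lt aa (by omega) _ _
    · rw [List.drop_eq_nil_of_le hge]; rfl
  have hrhs : RStar (USys aa) (bs.foldl appT (r.subst σ)) (((bs.drop j).map (down aa)).foldl appT
      ((down aa (appVars r N j)).subst fun x => down aa (σ' x))) := by
    rw [hsplit r hrN]
    refine rstar_foldl_appT ?_ _ fun b _ => rstar_down aa b
    exact ((rstar_down aa _).subst σ').trans (RStar.subst_of_forall (fun x => rstar_down aa _) _)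
  rw [hlhs]
  exact .head' ((Rew.rule _ _ _ hrule).foldl_appT _) (rstar_UD_down_of_rstar_USys hrhs)

theorem transGen_down_foldl_of_rew (hR : IsATRS R) (hl : LHVF R) (haa : AASpec R aa)
    {s t : ATerm C} (h : Rew R s t) (bs : List (ATerm C)) :
    Relation.TransGen (Rew (UD aa R)) (down aa (bs.foldl appT s)) (down aa (bs.foldl appT t)) := by
  induction h using Rew.induction_aterm generalizing bs with
  | rule l r σ hmem => exact transGen_down_foldl_of_mem hR hl haa hmem σ bs
  | left a a' b _ ih => exact ih (b :: bs)
  | right a b b' _ ih =>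
    obtain ⟨g, base, k, hmerge⟩ := merge_eq_app_update aa (down aa a)
    simp only [down_foldl, down_appT, hmerge]
    exact TransGen.foldl_merge_app_update aa (ih []) g base k _
  | sym p ts j u _ ih =>
    have hd : ∀ v, down aa (.app (some p) (Function.update ts j v)) =
        .app (some p) (Function.update (down aa ∘ ts) j (down aa v)) := fun v =>
      congrArg (Term.app (some p)) (Function.comp_update (down aa) ts j v)
    have ih' : Relation.TransGen (Rew (UD aa R)) (down aa (ts j)) (down aa u) := ih []
    have := TransGen.foldl_merge_app_update aa ih' (some p) (down aa ∘ ts) j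
      (bs.map (down aa))
    rw [← hd, ← hd, Function.update_eq_self] at this
    rwa [down_foldl, down_foldl]

end Simulation

section Curry

variable {C : Type}

theorem curryId_appT (a b : ATerm C) : curryId (appT a b) = appT (curryId a) (curryId b) := by
  simp [appT, curryId]

theorem curryId_some (p : C × ℕ) (ts : Fin (uar (some p)) → ATerm C) :
    curryId (.app (some p) ts) = (List.ofFn fun j => curryId (ts j)).foldl appT (constT p.1) := by
  rw [curryId]

theorem subst_foldl_appT (a : ATerm C) (bs : List (ATerm C)) (σ : ℕ → ATerm C) :
    (bs.foldl appT a).subst σ = (bs.map (Term.subst σ)).foldl appT (a.subst σ) := by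
  induction bs generalizing a with
  | nil => rfl
  | cons b bs ih => simp only [List.foldl_cons, List.map_cons, ih, subst_appT]

theorem size_foldl_appT (a : ATerm C) (bs : List (ATerm C)) :
    (bs.foldl appT a).size = a.size + (bs.map fun b => 1 + b.size).sum := by
  induction bs generalizing a with
  | nil => simp
  | cons b bs ih => simp only [List.foldl_cons, List.map_cons, List.sum_cons, ih, size_appT]; omega

theorem applicativeT_foldl_appT {a : ATerm C} {bs : List (ATerm C)} (ha : ApplicativeT a)
    (hbs : ∀ b ∈ bs, ApplicativeT b) : ApplicativeT (bs.foldl appT a) := by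
  induction bs generalizing a with
  | nil => exact ha
  | cons b bs ih => exact ih (ha.appT (hbs b (by simp))) fun b' hb' => hbs b' (by simp [hb'])

theorem curryId_subst (t : ATerm C) (σ : ℕ → ATerm C) :
    curryId (t.subst σ) = (curryId t).subst (fun x => curryId (σ x)) := by
  induction t using ATerm.induction with
  | var x => rfl
  | appT a b iha ihb => rw [subst_appT, curryId_appT, curryId_appT, subst_appT, iha, ihb]
  | sym p ts ih =>
    change curryId (.app (some p) fun j => (ts j).subst σ) = _
    rw [curryId_some, curryId_some, subst_foldl_appT, subst_constT, List.map_ofFn]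
    exact congrArg (fun bs => List.foldl appT (constT p.1) bs)
      (congrArg List.ofFn (funext fun j => ih j))

theorem applicativeT_curryId (t : ATerm C) : ApplicativeT (curryId t) := by
  induction t using ATerm.induction with
  | var x => exact applicativeT_var x
  | appT a b iha ihb => rw [curryId_appT]; exact iha.appT ihb
  | sym p ts ih =>
    rw [curryId_some]
    refine applicativeT_foldl_appT (applicativeT_constT p.1) fun b hb => ?_
    obtain ⟨j, rfl⟩ := List.mem_ofFn.mp hb
    exact ih j

theorem curryId_eq_self {t : ATerm C} (h : ApplicativeT t) : curryId t = t := by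
  induction t using ATerm.induction with
  | var x => rfl
  | appT a b iha ihb =>
    rw [curryId_appT, iha (h.subterm (.appT_left a b)), ihb (h.subterm (.appT_right a b))]
  | sym p ts _ =>
    obtain ⟨c, i⟩ := p
    obtain rfl := h.arity_eq_zero
    rw [curryId_some, app_some_zero_eq_constT]
    rfl

theorem curryId_eq_of_rew_USys {aa : C → ℕ} {a b : ATerm C} (h : Rew (USys aa) a b) :
    curryId a = curryId b := by
  induction h using Rew.induction_aterm with
  | rule l r σ hmem =>
    obtain ⟨c, i, -, us, y, hl, hr⟩ := USys.subst_rule aa hmem σ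
    rw [hl, hr, curryId_appT]
    change appT ((List.ofFn fun k : Fin i => curryId (us k)).foldl appT (constT c)) (curryId y) =
      (List.ofFn fun k : Fin (i + 1) => curryId (Fin.snoc (α := fun _ => ATerm C) us y k)).foldl
        appT (constT c)
    rw [List.ofFn_succ', List.concat_eq_append, List.foldl_append]
    simp
  | left a a' b _ ih => rw [curryId_appT, curryId_appT, ih]
  | right a b b' _ ih => rw [curryId_appT, curryId_appT, ih]
  | sym p ts j u _ ih =>
    rw [curryId_some, curryId_some]
    congr 2
    funext k
    by_cases hk : k = j
    · subst hk; simp [ih]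
    · simp [Function.update_of_ne hk]

theorem curryId_eq_of_rstar_USys {aa : C → ℕ} {a b : ATerm C} (h : RStar (USys aa) a b) :
    curryId a = curryId b := by
  induction h with
  | refl => rfl
  | tail _ hbc ih => exact ih.trans (curryId_eq_of_rew_USys hbc)

theorem Eta.rew {aa : C → ℕ} {R : Set (ATerm C × ATerm C)} {p : ATerm C × ATerm C}
    (h : Eta aa R p) (σ : ℕ → ATerm C) : Rew R (p.1.subst σ) (p.2.subst σ) := by
  induction h with
  | base p hp => exact .rule p.1 p.2 σ hp
  | eta l r c n x _ _ _ _ _ ih => rw [subst_appT, subst_appT]; exact ih.appT_left _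

theorem Eta.applicativeT {aa : C → ℕ} {R : Set (ATerm C × ATerm C)} (hR : IsATRS R)
    {p : ATerm C × ATerm C} (h : Eta aa R p) : ApplicativeT p.1 ∧ ApplicativeT p.2 := by
  induction h with
  | base p hp => exact ⟨(hR p hp).2.2.1, (hR p hp).2.2.2⟩
  | eta l r c n x _ _ _ _ _ ih =>
    exact ⟨ih.1.appT (applicativeT_var x), ih.2.appT (applicativeT_var x)⟩

theorem List.ofFn_update {α : Type*} {n : ℕ} (g : Fin n → α) (i : Fin n) (x : α) :
    List.ofFn (Function.update g i x) = (List.ofFn g).set i x := by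
  refine List.ext_getElem (by simp) fun j h1 _ => ?_
  rw [List.getElem_ofFn, List.getElem_set]
  by_cases hj : i.1 = j
  · rw [if_pos hj, show (⟨j, by simpa using h1⟩ : Fin n) = i from Fin.ext hj.symm,
      Function.update_self]
  · rw [if_neg hj, Function.update_of_ne (fun h => hj (congrArg Fin.val h).symm), List.getElem_ofFn]

theorem Rew.foldl_appT_set {ρ : Set (ATerm C × ATerm C)} (a : ATerm C) {bs : List (ATerm C)}
    {j : ℕ} (hj : j < bs.length) {y : ATerm C} (h : Rew ρ bs[j] y) :
    Rew ρ (bs.foldl appT a) ((bs.set j y).foldl appT a) := by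
  induction bs generalizing a j with
  | nil => simp at hj
  | cons b bs ih =>
    rcases j with _ | j
    · exact Rew.foldl_appT bs (Rew.appT_right a h)
    · exact ih _ (by simpa using hj) h

theorem Rew.curryId_of_etaDown {aa : C → ℕ} {R : Set (ATerm C × ATerm C)} (hR : IsATRS R)
    {a b : ATerm C} (h : Rew (EtaDown aa R) a b) : Rew R (curryId a) (curryId b) := by
  induction h using Rew.induction_aterm with
  | rule l' r' σ hmem =>
    obtain ⟨l, r, hEta, ⟨hl, -⟩, ⟨hr, -⟩⟩ := hmem
    rw [curryId_subst, curryId_subst, ← curryId_eq_of_rstar_USys hl, ← curryId_eq_of_rstar_USys hr,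
      curryId_eq_self (hEta.applicativeT hR).1, curryId_eq_self (hEta.applicativeT hR).2]
    exact hEta.rew _
  | left a a' b _ ih => rw [curryId_appT, curryId_appT]; exact ih.appT_left _
  | right a b b' _ ih => rw [curryId_appT, curryId_appT]; exact ih.appT_right _
  | sym p ts j u _ ih =>
    have hupd : (fun k => curryId (Function.update ts j u k)) =
        Function.update (fun k => curryId (ts k)) j (curryId u) :=
      Function.comp_update curryId ts j u
    rw [curryId_some, curryId_some, hupd, List.ofFn_update]
    exact Rew.foldl_appT_set _ (by simp) (by simpa using ih)

theorem size_le_size_curryId (t : ATerm C) : t.size ≤ (curryId t).size := by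
  induction t using ATerm.induction with
  | var x => rfl
  | appT a b iha ihb => rw [curryId_appT, size_appT, size_appT]; omega
  | sym p ts ih =>
    rw [curryId_some, size_foldl_appT, size_constT, List.map_ofFn, List.sum_ofFn]
    simp only [Term.size, Function.comp_apply]
    gcongr with j
    exact (ih j).trans (Nat.le_add_left _ _)

theorem size_curryId_lt (t : ATerm C) : (curryId t).size < 2 * t.size := by
  induction t using ATerm.induction with
  | var x => simp [curryId, Term.size]
  | appT a b iha ihb => rw [curryId_appT, size_appT, size_appT]; omega
  | sym p ts ih =>
    rw [curryId_some, size_foldl_appT, size_constT, List.map_ofFn, List.sum_ofFn]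
    simp only [Term.size, Function.comp_apply, mul_add, Finset.mul_sum]
    have : ∑ j, (1 + (curryId (ts j)).size) ≤ ∑ j, 2 * (ts j).size :=
      Finset.sum_le_sum fun j _ => by have := ih j; omega
    omega

end Curry

/-- Currying turns the `R_η↓`-steps of the derivation into an `R`-derivation, so there are at most
`L` of them; `U`-steps decrease the size, which after an `R_η↓`-step is at most `S`. -/
theorem relPow_UD_le {C : Type} {R : Set (ATerm C × ATerm C)} {aa : C → ℕ} (hR : IsATRS R)
    {M : ℕ} {a w : ATerm C} (h : RelPow (Rew (UD aa R)) M a w) {L S : ℕ}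
    (hbound : ∀ m b, RelPow (Rew R) m (curryId a) b → m ≤ L ∧ b.size ≤ S) :
    M ≤ L * (S + 1) + a.size := by
  induction M generalizing a L with
  | zero => omega
  | succ M ih =>
    obtain ⟨a', hstep, hrest⟩ := h
    rcases Rew.union_cases hstep with hE | hU
    · have hc := hE.curryId_of_etaDown hR
      obtain ⟨hL, hsize⟩ := hbound 1 _ (.one hc)
      have hM := ih hrest (L := L - 1) fun m b hb => by
        have := hbound (m + 1) b ⟨_, hc, hb⟩; omega
      have hcurry := size_le_size_curryId a'
      have hmul : (L - 1) * (S + 1) + (S + 1) = L * (S + 1) := by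
        rw [← Nat.succ_mul]; congr 1; omega
      omega
    · have hsize := size_eq_of_rew_USys aa hU
      have hM := ih hrest (L := L) (by rwa [← curryId_eq_of_rew_USys hU])
      omega

section Collapse

variable {C : Type} {R : Set (ATerm C × ATerm C)}

theorem constT_injective : Function.Injective (constT : C → ATerm C) := by
  intro c c' h
  simp only [constT, Term.app.injEq, Option.some.injEq, Prod.mk.injEq] at h
  exact h.1.1

def ruleConsts (R : Set (ATerm C × ATerm C)) : Set C :=
  {c | ∃ p ∈ R, Subterm (constT c) p.1 ∨ Subterm (constT c) p.2}

theorem finite_ruleConsts (hfin : R.Finite) : (ruleConsts R).Finite := by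
  refine (hfin.biUnion fun p _ => ((Term.finite_setOf_subterm p.1).union
    (Term.finite_setOf_subterm p.2)).preimage constT_injective.injOn).subset ?_
  rintro c ⟨p, hp, hc⟩
  exact Set.mem_biUnion hp hc

open Classical in
/-- Rewriting an applicative term with `R` cannot tell apart variables and constants not occurring
in `R`, so all of them are sent to `x₀`; this leaves finitely many terms of each size. -/
noncomputable def collapse (R : Set (ATerm C × ATerm C)) : ATerm C → ATerm C
  | .var _ => .var 0
  | .app none ts => appT (collapse R (ts ⟨0, by simp [uar]⟩)) (collapse R (ts ⟨1, by simp [uar]⟩))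
  | .app (some (c, 0)) _ => if c ∈ ruleConsts R then constT c else .var 0
  | .app (some (_, _ + 1)) _ => .var 0

theorem collapse_appT (a b : ATerm C) :
    collapse R (appT a b) = appT (collapse R a) (collapse R b) := by
  simp [appT, collapse]

theorem size_collapse_le (t : ATerm C) : (collapse R t).size ≤ t.size := by
  induction t using ATerm.induction with
  | var x => rfl
  | appT a b iha ihb => rw [collapse_appT, size_appT, size_appT]; omega
  | sym p ts _ =>
    have := Term.one_le_size (Term.app (some p) ts)
    obtain ⟨c, _ | i⟩ := p
    · rw [collapse]
      split_ifs
      · rw [size_constT]; omega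
      · exact this
    · exact this

theorem ApplicativeT.subst {r : ATerm C} {σ : ℕ → ATerm C} (hr : ApplicativeT r)
    (hσ : ∀ x, Subterm (.var x) r → ApplicativeT (σ x)) : ApplicativeT (r.subst σ) := by
  intro u f ts hsub he
  rcases Subterm.of_subst hsub with ⟨g, gs, hsubt, rfl⟩ | ⟨x, hx, hu⟩
  · cases he
    exact hr _ f gs hsubt rfl
  · exact hσ x hx u f ts hu he

theorem Rew.applicativeT (hR : IsATRS R) {a b : ATerm C} (h : Rew R a b) (ha : ApplicativeT a) :
    ApplicativeT b := by
  induction h using Rew.induction_aterm with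
  | rule l r σ hmem =>
    exact (hR _ hmem).2.2.2.subst fun x hx => ha.subterm (.subst_var σ ((hR _ hmem).2.1 x hx))
  | left a a' b _ ih =>
    exact (ih (ha.subterm (.appT_left a b))).appT (ha.subterm (.appT_right a b))
  | right a b b' _ ih =>
    exact (ha.subterm (.appT_left a b)).appT (ih (ha.subterm (.appT_right a b)))
  | sym p ts j _ _ _ =>
    obtain ⟨c, i⟩ := p
    obtain rfl := ha.arity_eq_zero
    exact j.elim0

theorem collapse_subst {t : ATerm C} (ht : ApplicativeT t)
    (hc : ∀ c, Subterm (constT c) t → c ∈ ruleConsts R) (σ : ℕ → ATerm C) :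
    collapse R (t.subst σ) = t.subst (fun x => collapse R (σ x)) := by
  induction t using ATerm.induction with
  | var x => rfl
  | appT a b iha ihb =>
    rw [subst_appT, collapse_appT, subst_appT,
      iha (ht.subterm (.appT_left a b)) fun c h => hc c (h.trans (.appT_left a b)),
      ihb (ht.subterm (.appT_right a b)) fun c h => hc c (h.trans (.appT_right a b))]
  | sym p ts _ =>
    obtain ⟨c, i⟩ := p
    obtain rfl := ht.arity_eq_zero
    rw [app_some_zero_eq_constT] at hc ⊢
    rw [subst_constT, subst_constT]
    exact if_pos (hc c (.refl _))

theorem Rew.collapse (hR : IsATRS R) {a b : ATerm C} (h : Rew R a b) (ha : ApplicativeT a) :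
    Rew R (collapse R a) (collapse R b) := by
  induction h using Rew.induction_aterm with
  | rule l r σ hmem =>
    rw [collapse_subst (hR _ hmem).2.2.1 (fun c hc => ⟨_, hmem, .inl hc⟩),
      collapse_subst (hR _ hmem).2.2.2 (fun c hc => ⟨_, hmem, .inr hc⟩)]
    exact .rule l r _ hmem
  | left a a' b _ ih =>
    rw [collapse_appT, collapse_appT]
    exact (ih (ha.subterm (.appT_left a b))).appT_left _
  | right a b b' _ ih =>
    rw [collapse_appT, collapse_appT]
    exact (ih (ha.subterm (.appT_right a b))).appT_right _
  | sym p ts j _ _ _ =>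
    obtain ⟨c, i⟩ := p
    obtain rfl := ha.arity_eq_zero
    exact j.elim0

inductive Collapsed (R : Set (ATerm C × ATerm C)) : ATerm C → Prop
  | var : Collapsed R (.var 0)
  | const (c : C) : c ∈ ruleConsts R → Collapsed R (constT c)
  | appT (a b : ATerm C) : Collapsed R a → Collapsed R b → Collapsed R (appT a b)

theorem collapsed_collapse (t : ATerm C) : Collapsed R (collapse R t) := by
  induction t using ATerm.induction with
  | var x => exact .var
  | appT a b iha ihb => rw [collapse_appT]; exact .appT _ _ iha ihb
  | sym p ts _ =>
    obtain ⟨c, _ | i⟩ := p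
    · rw [collapse]
      split_ifs with hc
      · exact .const c hc
      · exact .var
    · exact .var

theorem finite_collapsed (hfin : R.Finite) (N : ℕ) :
    {t : ATerm C | Collapsed R t ∧ t.size ≤ N}.Finite := by
  induction N with
  | zero => exact Set.finite_empty.subset fun t ⟨_, ht⟩ => by have := t.one_le_size; omega
  | succ N ih =>
    refine (((Set.finite_singleton (.var 0)).union ((finite_ruleConsts hfin).image constT)).union
      (ih.image2 appT ih)).subset ?_
    rintro t ⟨ht, hsize⟩
    cases ht with
    | var => exact .inl (.inl rfl)
    | const c hc => exact .inl (.inr ⟨c, hc, rfl⟩)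
    | appT a b ha hb =>
      rw [size_appT] at hsize
      have := a.one_le_size
      have := b.one_le_size
      exact .inr ⟨a, ⟨ha, by omega⟩, b, ⟨hb, by omega⟩, rfl⟩

end Collapse

section Main

variable {C : Type} {R : Set (ATerm C × ATerm C)} {aa : C → ℕ}

theorem exists_relPow_UD_of_relPow (hR : IsATRS R) (hl : LHVF R) (haa : AASpec R aa) {m : ℕ}
    {t u : ATerm C} (h : RelPow (Rew R) m t u) : ∃ v, RelPow (Rew (UD aa R)) m t v := by
  have hdown : ∀ m (x u : ATerm C), RelPow (Rew R) m x u →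
      ∃ M v, m ≤ M ∧ RelPow (Rew (UD aa R)) M (down aa x) v := by
    intro m
    induction m with
    | zero => exact fun x _ _ => ⟨0, down aa x, le_rfl, rfl⟩
    | succ m ih =>
      rintro x u ⟨y, hxy, hyu⟩
      obtain ⟨k, hk, hxy'⟩ := (transGen_down_foldl_of_rew hR hl haa hxy []).exists_relPow
      obtain ⟨M, v, hM, hyv⟩ := ih y u hyu
      exact ⟨k + M, v, by omega, hxy'.add hyv⟩
  obtain ⟨k, hk⟩ := ((rstar_down aa t).mono (ρ' := UD aa R) Set.subset_union_right).exists_relPow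
  obtain ⟨M, v, hM, hv⟩ := hdown m t u h
  exact (hk.add hv).exists_of_le (by omega)

theorem exists_curryId_bound (hR : IsATRS R) (hfin : R.Finite) (hterm : Terminating R) (n : ℕ) :
    ∃ L S, ∀ t : ATerm C, t.size ≤ n →
      ∀ m b, RelPow (Rew R) m (curryId t) b → m ≤ L ∧ b.size ≤ S := by
  have hvars : ∀ p ∈ R, ∀ x, Subterm (.var x) p.2 → Subterm (.var x) p.1 :=
    fun p hp => (hR p hp).2.1
  obtain ⟨L, hL⟩ := (finite_collapsed hfin (2 * n)).exists_relPow_bound hterm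
    (Rew.finite_setOf hvars hfin)
  obtain ⟨K, hK1, hK⟩ := Rew.exists_size_le_mul hvars hfin
  refine ⟨L, 2 * n * K ^ L, fun t ht m b hb => ?_⟩
  have hsize : (curryId t).size ≤ 2 * n := by have := size_curryId_lt t; omega
  have hm : m ≤ L := hL _ ⟨collapsed_collapse _, (size_collapse_le _).trans hsize⟩ m _
    (hb.map ApplicativeT (collapse R)
      (fun _ _ ha hab => ⟨hab.applicativeT hR ha, hab.collapse hR ha⟩) (applicativeT_curryId t))
  refine ⟨hm, ?_⟩
  calc b.size ≤ (curryId t).size * K ^ m := hb.le_mul_pow (μ := Term.size) hK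
    _ ≤ 2 * n * K ^ L := Nat.mul_le_mul hsize (Nat.pow_le_pow_right hK1 hm)

theorem exists_relPow_UD_bound (hR : IsATRS R) (hfin : R.Finite) (hterm : Terminating R) (n : ℕ) :
    ∃ K, ∀ t : ATerm C, t.size ≤ n → ∀ M w, RelPow (Rew (UD aa R)) M t w → M ≤ K := by
  obtain ⟨L, S, hLS⟩ := exists_curryId_bound hR hfin hterm n
  exact ⟨L * (S + 1) + n, fun t ht M w h => (relPow_UD_le hR h (hLS t ht)).trans (by omega)⟩

end Main

/-- for a terminating ATRS `R`, `dh(→_R, t) ≤ dh(→_{U↓(R)}, t)`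
for every term over the signature of `R`, hence `dc_R(n) ≤ dc_{U↓(R)}(n)` and
in particular `dc_R(n) ∈ O(dc_{U↓(R)}(n))`. -/
theorem dc_reflect {C : Type} (R : Set (ATerm C × ATerm C)) (aa : C → ℕ)
    (hR : IsATRS R) (hl : LHVF R) (haa : AASpec R aa)
    (hfin : R.Finite) (hterm : Terminating R) :
    (∀ t : ATerm C, ApplicativeT t → dh (Rew R) t ≤ dh (Rew (UD aa R)) t) ∧
    (∀ n, dcOn (Rew R) ApplicativeT n ≤ dcOn (Rew (UD aa R)) (GoodTerm aa) n) ∧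
    BigO (dcOn (Rew R) ApplicativeT) (dcOn (Rew (UD aa R)) (GoodTerm aa)) := by
  have hdh : ∀ t : ATerm C, ApplicativeT t → dh (Rew R) t ≤ dh (Rew (UD aa R)) t := fun t _ =>
    have ⟨K, hK⟩ := exists_relPow_UD_bound (aa := aa) hR hfin hterm t.size
    dh_le_dh (hK t le_rfl) fun _ _ h => exists_relPow_UD_of_relPow hR hl haa h
  have hdc : ∀ n, dcOn (Rew R) ApplicativeT n ≤ dcOn (Rew (UD aa R)) (GoodTerm aa) n := fun n =>
    have ⟨K, hK⟩ := exists_relPow_UD_bound (aa := aa) hR hfin hterm n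
    dcOn_le_dcOn (fun t ht => ht.goodTerm aa) hdh fun t _ ht => dh_le_of_forall_relPow (hK t ht)
  exact ⟨hdh, hdc, 1, 0, fun n => by simpa using hdc n⟩
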